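/- Dirichlet form bound: let 0 < u_- < u_+ < 1. There exists C = C_{u_-,u_+} > 0 such that for every β > 0 the following holds. Let ν = ν_{u(·)} be the product Bernoulli measure with means u, let x ∈ T_N^d and y = x + e_j with u_x, u_y ∈ [u_-,u_+], let h satisfy h(η^{x,y}) = h(η) for all η, and let f be a probability density with respect to ν. Then ∫ h (ω_x − ω_y) f dν ≤ β D_{K;x,y}(√f; ν) + (C/β) ∫ h² f dν + R, where D_{K;x,y}(g;ν) = (1/4) ∫ (g(η^{x,y}) − g(η))² dν and the error satisfies |R| ≤ C |u_x − u_y| ∫ |h| f dν. -/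

import Mathlib

open Finset

/-- The discrete torus `T_N^d = (ℤ/Nℤ)^d`. -/
abbrev Torus (d N : ℕ) := Fin d → ZMod N

/-- The configuration space `X_N = {0,1}^{T_N^d}`. -/
abbrev Config (d N : ℕ) := Torus d N → Bool

/-- The value in `{0,1} ⊂ ℝ` of an occupation variable. -/
noncomputable def bval : Bool → ℝ := fun b => if b then 1 else 0

/-- The `i`-th unit vector `e_i` of the discrete torus. -/
def uvec (d N : ℕ) (i : Fin d) : Torus d N := fun j => if j = i then 1 else 0

/-- `swapC x y η = η^{x,y}`, the configuration with the values at `x` and `y` exchanged. -/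
def swapC {d N : ℕ} (x y : Torus d N) (η : Config d N) : Config d N :=
  fun z => η (Equiv.swap x y z)

/-- The product Bernoulli measure with means `u`. -/
noncomputable def bern {d N : ℕ} [NeZero N] (u : Torus d N → ℝ) (η : Config d N) : ℝ :=
  ∏ x : Torus d N, (if η x then u x else 1 - u x)


/-- `χ(ρ) = ρ(1-ρ)`. -/
noncomputable def chi (ρ : ℝ) : ℝ := ρ * (1 - ρ)

/-- `ω_z = (η_z - u_z)/χ(u_z)`. -/
noncomputable def omg {d N : ℕ} (u : Torus d N → ℝ) (z : Torus d N) (η : Config d N) : ℝ :=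
  (bval (η z) - u z) / chi (u z)

/-- The piece `D_{K;x,y}(g;ν) = (1/4) ∫ (g(η^{x,y}) - g(η))² dν` of the Kawasaki
Dirichlet form on the bond `{x,y}`. -/
noncomputable def dirKxy {d N : ℕ} [NeZero N] (x y : Torus d N)
    (g : Config d N → ℝ) (ν : Config d N → ℝ) : ℝ :=
  (1/4) * ∑ η : Config d N, (g (swapC x y η) - g η)^2 * ν η

/-!
Write `τ` for the exchange `η ↦ η^{x,y}`, `W = ω_x - ω_y` and `δ = min(u_-, 1 - u_+)`, so that
`u_x, u_y ∈ [δ, 1 - δ]`. Since `h` is `τ`-invariant, reindexing by `τ` splits `∫ h W f dν` into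
`½ ∫ h W (f - f∘τ) dν` and `R = ½ ∑ h (f∘τ) (W ν + (W ν)∘τ)`. Writing
`f - f∘τ = (√f - √f∘τ)(√f + √f∘τ)`, Young's inequality bounds the first part by
`β D_{K;x,y}(√f) + (C/β) ∫ h² f dν`, using `|W| ≤ 2/δ²` and `δ² ν ≤ ν∘τ`. In `R`, the
single-site identity `ω_z ν_z(η_z) = ±1` makes `W ν + (W ν)∘τ` exactly `±2 (u_x - u_y)` times
the weight of the sites other than `x, y`, whence `|R| ≤ δ⁻² |u_x - u_y| ∫ |h| f dν`.
-/

open Function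

lemma half_mul_sq_sub_sq_le {β : ℝ} (hβ : 0 < β) (a s t : ℝ) :
    (1 / 2) * a * (s ^ 2 - t ^ 2) ≤ β / 4 * (t - s) ^ 2 + a ^ 2 / (2 * β) * (s ^ 2 + t ^ 2) := by
  have expand : β / 4 * (t - s) ^ 2 + a ^ 2 / (2 * β) * (s ^ 2 + t ^ 2)
      - (1 / 2) * a * (s ^ 2 - t ^ 2)
      = ((β * (s - t) - a * (s + t)) ^ 2 + a ^ 2 * (s - t) ^ 2) / (4 * β) := by
    field_simp
    ring
  have : 0 ≤ ((β * (s - t) - a * (s + t)) ^ 2 + a ^ 2 * (s - t) ^ 2) / (4 * β) := by positivity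
  linarith

lemma half_mul_mul_sub_le {β B h W p q ν : ℝ} (hβ : 0 < β) (hW : |W| ≤ B) (hp : 0 ≤ p)
    (hq : 0 ≤ q) (hν : 0 ≤ ν) :
    (1 / 2) * (h * W * ν * (p - q))
      ≤ β / 4 * ((√q - √p) ^ 2 * ν) + B ^ 2 / (2 * β) * (h ^ 2 * p * ν + h ^ 2 * q * ν) := by
  have hW2 : (h * W) ^ 2 ≤ h ^ 2 * B ^ 2 := by
    rw [mul_pow]
    exact mul_le_mul_of_nonneg_left (sq_le_sq' (abs_le.1 hW).1 (abs_le.1 hW).2) (sq_nonneg _)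
  have young := half_mul_sq_sub_sq_le hβ (h * W) √p √q
  rw [Real.sq_sqrt hp, Real.sq_sqrt hq] at young
  have : (h * W) ^ 2 / (2 * β) * (p + q) ≤ h ^ 2 * B ^ 2 / (2 * β) * (p + q) := by
    gcongr
  calc (1 / 2) * (h * W * ν * (p - q)) = ((1 / 2) * (h * W) * (p - q)) * ν := by ring
    _ ≤ (β / 4 * (√q - √p) ^ 2 + h ^ 2 * B ^ 2 / (2 * β) * (p + q)) * ν := by
        gcongr
        linarith
    _ = _ := by ring

namespace Function.Involutive

variable {α : Type*} [Fintype α] {τ : α → α}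

lemma sum_comp (hτ : Involutive τ) (F : α → ℝ) : ∑ a, F (τ a) = ∑ a, F a :=
  Equiv.sum_comp hτ.toPerm F

lemma sum_mul_eq_half_add_half (hτ : Involutive τ) {h : α → ℝ} (hh : ∀ a, h (τ a) = h a)
    (W f ν : α → ℝ) :
    ∑ a, h a * W a * f a * ν a
      = (1 / 2) * ∑ a, h a * W a * ν a * (f a - f (τ a))
        + (1 / 2) * ∑ a, h a * f (τ a) * (W a * ν a + W (τ a) * ν (τ a)) := by
  have reflect : ∑ a, h a * W a * f a * ν a = ∑ a, h a * W (τ a) * f (τ a) * ν (τ a) := by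
    rw [← hτ.sum_comp]
    simp only [hh]
  rw [← mul_add, ← Finset.sum_add_distrib]
  calc ∑ a, h a * W a * f a * ν a
      = (1 / 2) * (∑ a, h a * W a * f a * ν a + ∑ a, h a * W (τ a) * f (τ a) * ν (τ a)) := by
        rw [← reflect]; ring
    _ = _ := by
        rw [← Finset.sum_add_distrib]
        congr 1
        exact Finset.sum_congr rfl fun a _ => by ring

lemma mul_sum_comp_mul_le (hτ : Involutive τ) {ν F : α → ℝ} {κ : ℝ}
    (hντ : ∀ a, κ * ν a ≤ ν (τ a)) (hF : ∀ a, 0 ≤ F a) :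
    κ * ∑ a, F (τ a) * ν a ≤ ∑ a, F a * ν a := by
  calc κ * ∑ a, F (τ a) * ν a = ∑ a, F (τ a) * (κ * ν a) := by
        rw [Finset.mul_sum]; exact Finset.sum_congr rfl fun a _ => by ring
    _ ≤ ∑ a, F (τ a) * ν (τ a) :=
        Finset.sum_le_sum fun a _ => mul_le_mul_of_nonneg_left (hντ a) (hF _)
    _ = ∑ a, F a * ν a := hτ.sum_comp fun a => F a * ν a

lemma half_sum_mul_sub_le (hτ : Involutive τ) {h W f ν : α → ℝ} {β κ B : ℝ}
    (hβ : 0 < β) (hκ : 0 < κ) (hκ1 : κ ≤ 1) (hh : ∀ a, h (τ a) = h a)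
    (hW : ∀ a, |W a| ≤ B) (hf : ∀ a, 0 ≤ f a) (hν : ∀ a, 0 ≤ ν a)
    (hντ : ∀ a, κ * ν a ≤ ν (τ a)) :
    (1 / 2) * ∑ a, h a * W a * ν a * (f a - f (τ a))
      ≤ β * ((1 / 4) * ∑ a, (√(f (τ a)) - √(f a)) ^ 2 * ν a)
        + B ^ 2 / (κ * β) * ∑ a, h a ^ 2 * f a * ν a := by
  set S₂ := ∑ a, h a ^ 2 * f a * ν a
  have hS₂ : 0 ≤ S₂ := Finset.sum_nonneg fun a _ => by have := hf a; have := hν a; positivity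
  have reflected : ∑ a, h a ^ 2 * f (τ a) * ν a ≤ κ⁻¹ * S₂ := by
    rw [le_inv_mul_iff₀ hκ]
    simpa only [hh] using hτ.mul_sum_comp_mul_le (F := fun a => h a ^ 2 * f a) hντ
      fun a => by have := hf a; positivity
  have hcoef : B ^ 2 / (2 * β) * (1 + κ⁻¹) ≤ B ^ 2 / (κ * β) := by
    rw [show B ^ 2 / (κ * β) = B ^ 2 / (2 * β) * (2 * κ⁻¹) by field_simp]
    gcongr
    linarith [one_le_inv_iff₀.2 ⟨hκ, hκ1⟩]
  calc (1 / 2) * ∑ a, h a * W a * ν a * (f a - f (τ a))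
      ≤ ∑ a, (β / 4 * ((√(f (τ a)) - √(f a)) ^ 2 * ν a)
          + B ^ 2 / (2 * β) * (h a ^ 2 * f a * ν a + h a ^ 2 * f (τ a) * ν a)) := by
        rw [Finset.mul_sum]
        exact Finset.sum_le_sum fun a _ => half_mul_mul_sub_le hβ (hW a) (hf a) (hf (τ a)) (hν a)
    _ = β * ((1 / 4) * ∑ a, (√(f (τ a)) - √(f a)) ^ 2 * ν a)
          + B ^ 2 / (2 * β) * (S₂ + ∑ a, h a ^ 2 * f (τ a) * ν a) := by
        simp only [Finset.sum_add_distrib, ← Finset.mul_sum]; ring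
    _ ≤ β * ((1 / 4) * ∑ a, (√(f (τ a)) - √(f a)) ^ 2 * ν a)
          + B ^ 2 / (2 * β) * (1 + κ⁻¹) * S₂ := by
        rw [mul_assoc _ (1 + κ⁻¹), add_mul, one_mul]
        gcongr
    _ ≤ _ := by gcongr

lemma abs_half_sum_le (hτ : Involutive τ) {h W f ν : α → ℝ} {E : ℝ}
    (hh : ∀ a, h (τ a) = h a) (hf : ∀ a, 0 ≤ f a)
    (hE : ∀ a, |W a * ν a + W (τ a) * ν (τ a)| ≤ E * ν (τ a)) :
    |(1 / 2) * ∑ a, h a * f (τ a) * (W a * ν a + W (τ a) * ν (τ a))|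
      ≤ E / 2 * ∑ a, |h a| * f a * ν a := by
  rw [abs_mul, abs_of_pos (by norm_num : (0 : ℝ) < 1 / 2)]
  calc (1 / 2) * |∑ a, h a * f (τ a) * (W a * ν a + W (τ a) * ν (τ a))|
      ≤ (1 / 2) * ∑ a, |h a| * f (τ a) * (E * ν (τ a)) := by
        gcongr
        refine (Finset.abs_sum_le_sum_abs _ _).trans (Finset.sum_le_sum fun a _ => ?_)
        rw [abs_mul, abs_mul, abs_of_nonneg (hf _)]
        exact mul_le_mul_of_nonneg_left (hE a) (by have := hf (τ a); positivity)
    _ = E / 2 * ∑ a, |h (τ a)| * f (τ a) * ν (τ a) := by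
        simp only [hh, Finset.mul_sum]; exact Finset.sum_congr rfl fun a _ => by ring
    _ = _ := by rw [hτ.sum_comp fun a => |h a| * f a * ν a]

end Function.Involutive

/-- `bern u η` is the product of `bernWeight (u z) (η z)` over the sites `z`. -/
noncomputable def bernWeight (p : ℝ) (b : Bool) : ℝ := if b then p else 1 - p

noncomputable def spin (b : Bool) : ℝ := if b then 1 else -1

lemma abs_spin (b : Bool) : |spin b| = 1 := by
  cases b <;> simp [spin]

lemma bernWeight_nonneg {p : ℝ} (hp : p ∈ Set.Icc 0 1) (b : Bool) : 0 ≤ bernWeight p b := by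
  cases b <;> simp only [bernWeight, Bool.false_eq_true, ↓reduceIte] <;> linarith [hp.1, hp.2]

lemma le_bernWeight {p δ : ℝ} (hp : p ∈ Set.Icc δ (1 - δ)) (b : Bool) : δ ≤ bernWeight p b := by
  cases b <;> simp only [bernWeight, Bool.false_eq_true, ↓reduceIte] <;> linarith [hp.1, hp.2]

lemma bernWeight_sub_bernWeight (q p : ℝ) (b : Bool) :
    bernWeight q b - bernWeight p b = spin b * (q - p) := by
  cases b <;> simp only [bernWeight, spin, Bool.false_eq_true, ↓reduceIte] <;> ring

/-- `ω` is the logarithmic derivative `∂ₚ log (bernWeight p b)`, and `∂ₚ bernWeight p b = ±1`. -/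
lemma bval_sub_div_chi_mul_bernWeight {p : ℝ} (hp : p ∈ Set.Ioo 0 1) (b : Bool) :
    (bval b - p) / chi p * bernWeight p b = spin b := by
  have : 1 - p ≠ 0 := by linarith [hp.2]
  have : p ≠ 0 := hp.1.ne'
  cases b <;> simp only [bval, bernWeight, spin, chi, Bool.false_eq_true, ↓reduceIte, zero_sub] <;>
    field_simp

lemma sq_le_chi {p δ : ℝ} (hδ : 0 ≤ δ) (hp : p ∈ Set.Icc δ (1 - δ)) : δ ^ 2 ≤ chi p := by
  rw [chi, sq]
  exact mul_le_mul hp.1 (by linarith [hp.2]) hδ (hδ.trans hp.1)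

section Torus

variable {d N : ℕ}

lemma swapC_involutive (x y : Torus d N) : Involutive (swapC x y) := by
  intro η; funext z; simp [swapC]

@[simp] lemma swapC_apply_left (x y : Torus d N) (η : Config d N) : swapC x y η x = η y := by
  simp [swapC]

@[simp] lemma swapC_apply_right (x y : Torus d N) (η : Config d N) : swapC x y η y = η x := by
  simp [swapC]

@[simp] lemma swapC_self (x : Torus d N) (η : Config d N) : swapC x x η = η := by
  funext z; simp [swapC]

lemma abs_omg_le {u : Torus d N → ℝ} {z : Torus d N} {δ : ℝ} (hδ : 0 < δ)
    (hz : u z ∈ Set.Icc δ (1 - δ)) (η : Config d N) : |omg u z η| ≤ 1 / δ ^ 2 := by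
  have hχ := sq_le_chi hδ.le hz
  have hχ0 : 0 < chi (u z) := lt_of_lt_of_le (by positivity) hχ
  have hnum : |bval (η z) - u z| ≤ 1 := by
    rw [abs_le]
    cases η z <;> simp only [bval, Bool.false_eq_true, ↓reduceIte] <;> constructor <;>
      linarith [hz.1, hz.2]
  rw [omg, abs_div, abs_of_pos hχ0, div_le_div_iff₀ hχ0 (by positivity)]
  nlinarith [abs_nonneg (bval (η z) - u z)]

lemma abs_omg_sub_omg_le {u : Torus d N → ℝ} {x y : Torus d N} {δ : ℝ} (hδ : 0 < δ)
    (hx : u x ∈ Set.Icc δ (1 - δ)) (hy : u y ∈ Set.Icc δ (1 - δ)) (η : Config d N) :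
    |omg u x η - omg u y η| ≤ 2 / δ ^ 2 := by
  calc |omg u x η - omg u y η| ≤ |omg u x η| + |omg u y η| := abs_sub _ _
    _ ≤ 1 / δ ^ 2 + 1 / δ ^ 2 := add_le_add (abs_omg_le hδ hx η) (abs_omg_le hδ hy η)
    _ = 2 / δ ^ 2 := by ring

variable [NeZero N]

lemma swapC_apply_of_mem_compl {x y z : Torus d N} (hz : z ∈ ({x, y} : Finset (Torus d N))ᶜ)
    (η : Config d N) : swapC x y η z = η z := by
  simp only [Finset.mem_compl, Finset.mem_insert, Finset.mem_singleton, not_or] at hz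
  simp [swapC, Equiv.swap_apply_of_ne_of_ne hz.1 hz.2]

lemma bern_nonneg {u : Torus d N → ℝ} (hu : ∀ z, u z ∈ Set.Icc 0 1) (η : Config d N) :
    0 ≤ bern u η :=
  Finset.prod_nonneg fun z _ => bernWeight_nonneg (hu z) (η z)

lemma bern_eq_mul_prod_compl (u : Torus d N → ℝ) {x y : Torus d N} (hxy : x ≠ y)
    (η : Config d N) :
    bern u η = bernWeight (u x) (η x) * bernWeight (u y) (η y)
      * ∏ z ∈ ({x, y} : Finset (Torus d N))ᶜ, bernWeight (u z) (η z) := by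
  rw [← Finset.prod_pair (f := fun z => bernWeight (u z) (η z)) hxy, Finset.prod_mul_prod_compl]
  rfl

lemma bern_swapC_eq_mul_prod_compl (u : Torus d N → ℝ) {x y : Torus d N} (hxy : x ≠ y)
    (η : Config d N) :
    bern u (swapC x y η) = bernWeight (u x) (η y) * bernWeight (u y) (η x)
      * ∏ z ∈ ({x, y} : Finset (Torus d N))ᶜ, bernWeight (u z) (η z) := by
  rw [bern_eq_mul_prod_compl u hxy, swapC_apply_left, swapC_apply_right]
  congr 1
  exact Finset.prod_congr rfl fun z hz => by rw [swapC_apply_of_mem_compl hz]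

lemma sq_mul_prod_compl_le_bern_swapC {u : Torus d N → ℝ} (hu : ∀ z, u z ∈ Set.Icc 0 1)
    {x y : Torus d N} (hxy : x ≠ y) {δ : ℝ} (hδ : 0 ≤ δ) (hx : u x ∈ Set.Icc δ (1 - δ))
    (hy : u y ∈ Set.Icc δ (1 - δ)) (η : Config d N) :
    δ ^ 2 * ∏ z ∈ ({x, y} : Finset (Torus d N))ᶜ, bernWeight (u z) (η z)
      ≤ bern u (swapC x y η) := by
  rw [bern_swapC_eq_mul_prod_compl u hxy, sq]
  have hK := Finset.prod_nonneg fun z (_ : z ∈ ({x, y} : Finset (Torus d N))ᶜ) =>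
    bernWeight_nonneg (hu z) (η z)
  gcongr
  exacts [bernWeight_nonneg (hu x) _, le_bernWeight hx _, le_bernWeight hy _]

lemma sq_mul_bern_le_bern_swapC {u : Torus d N → ℝ} (hu : ∀ z, u z ∈ Set.Icc 0 1)
    {x y : Torus d N} {δ : ℝ} (hδ : 0 ≤ δ) (hx : u x ∈ Set.Icc δ (1 - δ))
    (hy : u y ∈ Set.Icc δ (1 - δ)) (η : Config d N) :
    δ ^ 2 * bern u η ≤ bern u (swapC x y η) := by
  rcases eq_or_ne x y with rfl | hxy
  · have : δ ^ 2 ≤ 1 := pow_le_one₀ hδ (by linarith [hx.1, hx.2])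
    simpa using mul_le_of_le_one_left (bern_nonneg hu η) this
  refine le_trans ?_ (sq_mul_prod_compl_le_bern_swapC hu hxy hδ hx hy η)
  rw [bern_eq_mul_prod_compl u hxy]
  have hK := Finset.prod_nonneg fun z (_ : z ∈ ({x, y} : Finset (Torus d N))ᶜ) =>
    bernWeight_nonneg (hu z) (η z)
  have hw : bernWeight (u x) (η x) * bernWeight (u y) (η y) ≤ 1 := by
    apply mul_le_one₀ <;> cases η x <;> cases η y <;>
      simp only [bernWeight, Bool.false_eq_true, ↓reduceIte] <;>
      linarith [(hu x).1, (hu x).2, (hu y).1, (hu y).2]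
  gcongr
  exact mul_le_of_le_one_left hK hw

lemma omg_sub_mul_bern_add_swapC (u : Torus d N → ℝ) {x y : Torus d N} (hxy : x ≠ y)
    (hx : u x ∈ Set.Ioo 0 1) (hy : u y ∈ Set.Ioo 0 1) (η : Config d N) :
    (omg u x η - omg u y η) * bern u η
        + (omg u x (swapC x y η) - omg u y (swapC x y η)) * bern u (swapC x y η)
      = 2 * (u y - u x) * (spin (η x) * spin (η y))
        * ∏ z ∈ ({x, y} : Finset (Torus d N))ᶜ, bernWeight (u z) (η z) := by
  rw [bern_eq_mul_prod_compl u hxy, bern_swapC_eq_mul_prod_compl u hxy]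
  set K := ∏ z ∈ ({x, y} : Finset (Torus d N))ᶜ, bernWeight (u z) (η z)
  simp only [omg, swapC_apply_left, swapC_apply_right]
  linear_combination
    (bernWeight (u y) (η y) * K) * bval_sub_div_chi_mul_bernWeight hx (η x)
    - (bernWeight (u x) (η x) * K) * bval_sub_div_chi_mul_bernWeight hy (η y)
    + (bernWeight (u y) (η x) * K) * bval_sub_div_chi_mul_bernWeight hx (η y)
    - (bernWeight (u x) (η y) * K) * bval_sub_div_chi_mul_bernWeight hy (η x)
    + (spin (η x) * K) * bernWeight_sub_bernWeight (u y) (u x) (η y)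
    + (spin (η y) * K) * bernWeight_sub_bernWeight (u y) (u x) (η x)

lemma abs_omg_sub_mul_bern_add_swapC_le {u : Torus d N → ℝ} (hu : ∀ z, u z ∈ Set.Icc 0 1)
    {x y : Torus d N} {δ : ℝ} (hδ : 0 < δ) (hx : u x ∈ Set.Icc δ (1 - δ))
    (hy : u y ∈ Set.Icc δ (1 - δ)) (η : Config d N) :
    |(omg u x η - omg u y η) * bern u η
        + (omg u x (swapC x y η) - omg u y (swapC x y η)) * bern u (swapC x y η)|
      ≤ 2 * |u x - u y| / δ ^ 2 * bern u (swapC x y η) := by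
  rcases eq_or_ne x y with rfl | hxy
  · have := bern_nonneg hu η
    simp only [swapC_self, sub_self, zero_mul, add_zero, abs_zero]
    positivity
  have mem_Ioo : ∀ {p : ℝ}, p ∈ Set.Icc δ (1 - δ) → p ∈ Set.Ioo 0 1 :=
    fun hp => ⟨hδ.trans_le hp.1, by linarith [hp.2]⟩
  rw [omg_sub_mul_bern_add_swapC u hxy (mem_Ioo hx) (mem_Ioo hy), abs_mul, abs_mul, abs_mul,
    abs_mul, abs_spin, abs_spin, abs_two, abs_sub_comm,
    abs_of_nonneg (Finset.prod_nonneg fun z _ => bernWeight_nonneg (hu z) (η z))]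
  calc _ = 2 * |u x - u y| / δ ^ 2
        * (δ ^ 2 * ∏ z ∈ ({x, y} : Finset (Torus d N))ᶜ, bernWeight (u z) (η z)) := by
        field_simp
    _ ≤ _ := by gcongr; exact sq_mul_prod_compl_le_bern_swapC hu hxy hδ.le hx hy η

end Torus

theorem dirichlet_form_bound_general (um up : ℝ) (h0m : 0 < um) (hp1 : up < 1) :
    ∃ C : ℝ, 0 < C ∧ ∀ β : ℝ, 0 < β →
      ∀ (d N : ℕ) [NeZero N], 1 ≤ d →
      ∀ (u : Torus d N → ℝ), (∀ z, u z ∈ Set.Icc (0:ℝ) 1) →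
      ∀ (x : Torus d N) (j : Fin d), ∀ y : Torus d N, y = x + uvec d N j →
      u x ∈ Set.Icc um up → u y ∈ Set.Icc um up →
      ∀ (h : Config d N → ℝ), (∀ η, h (swapC x y η) = h η) →
      ∀ (f : Config d N → ℝ), (∀ η, 0 ≤ f η) →
        (∑ η : Config d N, f η * bern u η = 1) →
        ∃ R : ℝ,
          (∑ η : Config d N, h η * (omg u x η - omg u y η) * f η * bern u η)
            ≤ β * dirKxy x y (fun η => Real.sqrt (f η)) (bern u)
              + (C / β) * ∑ η : Config d N, (h η)^2 * f η * bern u η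
              + R
          ∧ |R| ≤ C * |u x - u y| * ∑ η : Config d N, |h η| * f η * bern u η := by
  set δ := min um (1 - up)
  have hδ : 0 < δ := lt_min h0m (sub_pos.2 hp1)
  refine ⟨4 / δ ^ 6, by positivity, ?_⟩
  intro β hβ d N _ _ u hu x _ y _ hux huy h hh f hf _
  have hIcc : Set.Icc um up ⊆ Set.Icc δ (1 - δ) :=
    Set.Icc_subset_Icc (min_le_left _ _) (by linarith [min_le_right um (1 - up)])
  have hx := hIcc hux
  have hy := hIcc huy
  have hδ1 : δ ^ 2 ≤ 1 := pow_le_one₀ hδ.le (by linarith [hx.1, hx.2])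
  have hτ := swapC_involutive x y
  refine ⟨(1 / 2) * ∑ η, h η * f (swapC x y η) * ((omg u x η - omg u y η) * bern u η
      + (omg u x (swapC x y η) - omg u y (swapC x y η)) * bern u (swapC x y η)), ?_, ?_⟩
  · rw [hτ.sum_mul_eq_half_add_half hh (fun η => omg u x η - omg u y η)]
    gcongr ?_ + _
    calc _ ≤ _ := hτ.half_sum_mul_sub_le hβ (pow_pos hδ 2) hδ1 hh (abs_omg_sub_omg_le hδ hx hy)
          hf (bern_nonneg hu) (sq_mul_bern_le_bern_swapC hu hδ.le hx hy)
      _ = _ := by rw [dirKxy]; field_simp; ring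
  · calc _ ≤ _ := hτ.abs_half_sum_le hh hf (abs_omg_sub_mul_bern_add_swapC_le hu hδ hx hy)
      _ = 1 / δ ^ 2 * |u x - u y| * ∑ η, |h η| * f η * bern u η := by ring
      _ ≤ _ := by
        have hS₁ : 0 ≤ ∑ η, |h η| * f η * bern u η :=
          Finset.sum_nonneg fun η _ => by have := hf η; have := bern_nonneg hu η; positivity
        have hC : 1 / δ ^ 2 ≤ 4 / δ ^ 6 := by
          rw [div_le_div_iff₀ (by positivity) (by positivity)]
          nlinarith [pow_le_one₀ (n := 2) (sq_nonneg δ) hδ1, pow_pos hδ 2]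
        gcongr

/-- Lemma 3.5 (Dirichlet form bound): there is `C = C_{u_-,u_+} > 0` such that for every
`β > 0`, every Bernoulli measure `ν = ν_{u(·)}`, every bond `{x, x+e_j}` with
`u_x, u_y ∈ [u_-,u_+]`, every swap-invariant `h` and every probability density `f`,
`∫ h (ω_x - ω_y) f dν ≤ β D_{K;x,y}(√f;ν) + (C/β) ∫ h² f dν + R` with
`|R| ≤ C |u_x - u_y| ∫ |h| f dν`. -/
theorem dirichlet_form_bound (um up : ℝ) (h0m : 0 < um) (hmp : um < up) (hp1 : up < 1) :
    ∃ C : ℝ, 0 < C ∧ ∀ β : ℝ, 0 < β →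
      ∀ (d N : ℕ) [NeZero N], 1 ≤ d →
      ∀ (u : Torus d N → ℝ), (∀ z, u z ∈ Set.Icc (0:ℝ) 1) →
      ∀ (x : Torus d N) (j : Fin d), ∀ y : Torus d N, y = x + uvec d N j →
      u x ∈ Set.Icc um up → u y ∈ Set.Icc um up →
      ∀ (h : Config d N → ℝ), (∀ η, h (swapC x y η) = h η) →
      ∀ (f : Config d N → ℝ), (∀ η, 0 ≤ f η) →
        (∑ η : Config d N, f η * bern u η = 1) →
        ∃ R : ℝ,
          (∑ η : Config d N, h η * (omg u x η - omg u y η) * f η * bern u η)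
            ≤ β * dirKxy x y (fun η => Real.sqrt (f η)) (bern u)
              + (C / β) * ∑ η : Config d N, (h η)^2 * f η * bern u η
              + R
          ∧ |R| ≤ C * |u x - u y| * ∑ η : Config d N, |h η| * f η * bern u η :=
  dirichlet_form_bound_general um up h0m hp1
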